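/- For ξ(1,2) = σ_a, ξ(1,3) = σ_c, ξ(2,3) = σ_b (the three distinct transpositions of S₃ on {a,b,c}), the adjacency graph on the nine points x_i is the disjoint union of the hexagon (a₂, c₃, c₁, b₂, b₃, a₁) and the triangle (c₂, b₁, a₃). -/

import Mathlib

abbrev Perm3 := Equiv.Perm (Fin 3)

/-- The transposition fixing `a` (letters `a,b,c` encoded as `0,1,2`). -/
def σa : Perm3 := Equiv.swap 1 2
/-- The transposition fixing `b`. -/
def σb : Perm3 := Equiv.swap 0 2
/-- The transposition fixing `c`. -/
def σc : Perm3 := Equiv.swap 0 1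

/-- The perspectivity matrix for `ξ(1,2) = σ_a`, `ξ(2,3) = σ_b`,
`ξ(1,3) = σ_c` (indices `1,2,3` encoded as `0,1,2`). -/
def xi13 (i j : Fin 3) : Perm3 :=
  match i.val, j.val with
  | 0, 1 => σa
  | 1, 0 => σa
  | 1, 2 => σb
  | 2, 1 => σb
  | 0, 2 => σc
  | 2, 0 => σc
  | _, _ => 1

/-- The adjacency of the nine points `x_i`: for `i < j`, `x_i ∼ y_j` iff
`ξ(i,j)(x) = y`. -/
def adj13 (p q : Fin 3 × Fin 3) : Prop :=
  p.2 ≠ q.2 ∧ ((p.2 < q.2 ∧ xi13 p.2 q.2 p.1 = q.1) ∨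
    (q.2 < p.2 ∧ xi13 q.2 p.2 q.1 = p.1))

/-- The hexagon `(a₂, c₃, c₁, b₂, b₃, a₁)`. -/
def v6 : Fin 6 → Fin 3 × Fin 3 :=
  ![(0,1), (2,2), (2,0), (1,1), (1,2), (0,0)]

/-- The triangle `(c₂, b₁, a₃)`. -/
def T : Finset (Fin 3 × Fin 3) := {(2,1), (1,0), (0,2)}

/-!
Each vertex has exactly one neighbour in each of the other two layers, so the graph is
2-regular, and following a vertex of layer 1 through layers 2 and 3 back to layer 1 applies
the monodromy `σ_c⁻¹ σ_b σ_a`. As a product of three transpositions it is odd, hence a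
transposition: here it swaps `a` and `c` and fixes `b`. The fixed point closes up after one
round (the triangle through `b₁`), the 2-cycle after two rounds (the hexagon through `a₁, c₁`).
The statement is then a finite check.
-/

instance : DecidableRel adj13 := fun p q => by unfold adj13; infer_instance

theorem v6_injective : Function.Injective v6 := by decide

theorem v6_notMem_T (k : Fin 6) : v6 k ∉ T := by revert k; decide

theorem image_v6_union_T : Finset.univ.image v6 ∪ T = Finset.univ := by decide

theorem adj13_iff (p q : Fin 3 × Fin 3) :
    adj13 p q ↔
      (∃ k : Fin 6, (p = v6 k ∧ q = v6 (k + 1)) ∨ (q = v6 k ∧ p = v6 (k + 1))) ∨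
        (p ≠ q ∧ p ∈ T ∧ q ∈ T) := by
  revert p q; decide

/-- For `ξ(1,2) = σ_a`, `ξ(1,3) = σ_c`, `ξ(2,3) = σ_b`, the adjacency graph on
the nine points `x_i` is the disjoint union of the hexagon
`(a₂, c₃, c₁, b₂, b₃, a₁)` and the triangle `(c₂, b₁, a₃)`. -/
theorem stmt_13 :
    Function.Injective v6 ∧ (∀ k : Fin 6, v6 k ∉ T) ∧
    (Finset.univ.image v6) ∪ T = Finset.univ ∧
    (∀ p q : Fin 3 × Fin 3, adj13 p q ↔
      ((∃ k : Fin 6, (p = v6 k ∧ q = v6 (k + 1)) ∨ (q = v6 k ∧ p = v6 (k + 1)))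
        ∨ (p ≠ q ∧ p ∈ T ∧ q ∈ T))) :=
  ⟨v6_injective, v6_notMem_T, image_v6_union_T, adj13_iff⟩
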